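/- Suppose t − τ(t) → ∞ and τ(t)/t → q ∈ (0,1) as t → ∞. Suppose g satisfies: g(0) = 0; g : [0,∞) → [0,∞) is increasing; g is C¹ and strictly positive on (0,∞); and g ∈ RV_0(β) for some β > 1. If x is a solution of the delay equation with x(t) → 0 as t → ∞, then it is NOT the case that lim_{t→∞} G(x(t))/t = a − b. -/

import Mathlib

open Filter Set Real MeasureTheory

/-- `f` is regularly varying at `0` (from the right) with index `β`. -/
def RVatZero (f : ℝ → ℝ) (β : ℝ) : Prop :=
  ∀ lam : ℝ, 0 < lam →
    Filter.Tendsto (fun y => f (lam * y) / f y) (nhdsWithin 0 (Set.Ioi 0))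
      (nhds (lam ^ β))

/-- `G(y) = ∫_y^1 du / g(u)`. -/
noncomputable def Gfun (g : ℝ → ℝ) : ℝ → ℝ := fun y => ∫ u in y..(1:ℝ), 1 / g u

/-!
If `G (x t) / t → a - b`, then, as `t - τ t ~ (1 - q) t`, the drop `G v - G u` between
`v = x t` and `u = x (t - τ t)` is eventually at least `(q / 2) G v`. Regular variation gives
`G v ≥ v / g (2 v) ≥ v / (M g v)` for any `M > 2 ^ β`, while `G v - G u ≤ (u - v) / g v`;
hence `u ≥ lam v` for a fixed `lam > 1`, and regular variation again gives `g u ≥ m g v`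
with `m > 1`. Along the equation `(G ∘ x)' = a - b g u / g v ≤ a - b m`, so `G (x t) / t`
has limit at most `a - b m < a - b`.
-/

open Topology

section Gfun

variable {g : ℝ → ℝ} (hgc : ContinuousOn g (Ioi 0)) (hgpos : ∀ y, 0 < y → 0 < g y)
include hgc hgpos

theorem continuousOn_one_div_of_pos : ContinuousOn (fun u => 1 / g u) (Ioi 0) :=
  continuousOn_const.div hgc fun u hu => (hgpos u hu).ne'

theorem intervalIntegrable_one_div_of_pos {p r : ℝ} (hp : 0 < p) (hr : 0 < r) :
    IntervalIntegrable (fun u => 1 / g u) volume p r :=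
  ((continuousOn_one_div_of_pos hgc hgpos).mono fun _ hu =>
    lt_of_lt_of_le (lt_min hp hr) hu.1).intervalIntegrable

theorem Gfun_sub_Gfun {p r : ℝ} (hp : 0 < p) (hr : 0 < r) :
    Gfun g p - Gfun g r = ∫ u in p..r, 1 / g u := by
  simp only [Gfun]
  rw [← intervalIntegral.integral_add_adjacent_intervals
    (intervalIntegrable_one_div_of_pos hgc hgpos hp hr)
    (intervalIntegrable_one_div_of_pos hgc hgpos hr one_pos)]
  ring

theorem hasDerivAt_Gfun {p : ℝ} (hp : 0 < p) : HasDerivAt (Gfun g) (-(1 / g p)) p := by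
  have hf := continuousOn_one_div_of_pos hgc hgpos
  have H := intervalIntegral.integral_hasDerivAt_right
    (intervalIntegrable_one_div_of_pos hgc hgpos one_pos hp)
    (hf.stronglyMeasurableAtFilter isOpen_Ioi p hp) (hf.continuousAt (isOpen_Ioi.mem_nhds hp))
  have hG : Gfun g = fun r => -∫ u in (1 : ℝ)..r, 1 / g u :=
    funext fun r => intervalIntegral.integral_symm 1 r
  exact hG ▸ H.neg

variable (hmono : MonotoneOn g (Ioi 0))
include hmono

theorem div_le_Gfun {p : ℝ} (hp : 0 < p) (hp1 : 2 * p ≤ 1) : p / g (2 * p) ≤ Gfun g p := by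
  have h2p : 0 < 2 * p := by linarith
  have hnear : p / g (2 * p) ≤ ∫ u in p..2 * p, 1 / g u := by
    calc p / g (2 * p) = ∫ _ in p..2 * p, 1 / g (2 * p) := by
          rw [intervalIntegral.integral_const, smul_eq_mul]; ring
      _ ≤ ∫ u in p..2 * p, 1 / g u :=
        intervalIntegral.integral_mono_on (by linarith) intervalIntegrable_const
          (intervalIntegrable_one_div_of_pos hgc hgpos hp h2p) fun u hu =>
          one_div_le_one_div_of_le (hgpos u (hp.trans_le hu.1))
            (hmono (hp.trans_le hu.1) h2p hu.2)
  have hfar : 0 ≤ ∫ u in 2 * p..1, 1 / g u :=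
    intervalIntegral.integral_nonneg hp1 fun u hu =>
      (one_div_pos.2 (hgpos u (h2p.trans_le hu.1))).le
  have hG1 : Gfun g 1 = 0 := intervalIntegral.integral_same
  linarith [Gfun_sub_Gfun hgc hgpos hp h2p, Gfun_sub_Gfun hgc hgpos h2p one_pos]

theorem Gfun_sub_Gfun_le {p r : ℝ} (hp : 0 < p) (hpr : p ≤ r) :
    Gfun g p - Gfun g r ≤ (r - p) / g p := by
  have hr := hp.trans_le hpr
  rw [Gfun_sub_Gfun hgc hgpos hp hr]
  calc ∫ u in p..r, 1 / g u ≤ ∫ _ in p..r, 1 / g p :=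
        intervalIntegral.integral_mono_on hpr (intervalIntegrable_one_div_of_pos hgc hgpos hp hr)
          intervalIntegrable_const fun u hu =>
          one_div_le_one_div_of_le (hgpos p hp) (hmono hp (hp.trans_le hu.1) hu.1)
    _ = (r - p) / g p := by rw [intervalIntegral.integral_const, smul_eq_mul]; ring

theorem mul_le_of_mul_Gfun_le_sub {v u ε M : ℝ} (hv : 0 < v) (hu : 0 < u) (hv1 : 2 * v ≤ 1)
    (hM : 0 < M) (h2v : g (2 * v) ≤ M * g v) (hε : 0 < ε)
    (hgap : ε * Gfun g v ≤ Gfun g v - Gfun g u) : (1 + ε / M) * v ≤ u := by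
  have hgv := hgpos v hv
  have hlow : ε / M * v / g v ≤ Gfun g v - Gfun g u :=
    calc ε / M * v / g v = ε * (v / (M * g v)) := by field_simp
      _ ≤ ε * (v / g (2 * v)) := by gcongr; exact hgpos _ (by linarith)
      _ ≤ ε * Gfun g v := by gcongr; exact div_le_Gfun hgc hgpos hmono hv hv1
      _ ≤ _ := hgap
  have hvu : v ≤ u := by
    by_contra! huv
    have : 0 ≤ Gfun g u - Gfun g v := by
      rw [Gfun_sub_Gfun hgc hgpos hu hv]
      exact intervalIntegral.integral_nonneg huv.le fun w hw =>
        (one_div_pos.2 (hgpos w (hu.trans_le hw.1))).le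
    have : 0 < ε / M * v / g v := by positivity
    linarith
  have := (div_le_div_iff_of_pos_right hgv).1
    (hlow.trans (Gfun_sub_Gfun_le hgc hgpos hmono hv hvu))
  linarith

end Gfun

theorem RVatZero.eventually_lt_mul {g : ℝ → ℝ} {β : ℝ} (hg : RVatZero g β)
    (hgpos : ∀ y, 0 < y → 0 < g y) {lam M : ℝ} (hlam : 0 < lam) (hM : lam ^ β < M) :
    ∀ᶠ y in 𝓝[>] 0, g (lam * y) < M * g y := by
  filter_upwards [(hg lam hlam).eventually_lt_const hM, self_mem_nhdsWithin] with y hy hy0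
  exact (div_lt_iff₀ (hgpos y hy0)).1 hy

theorem RVatZero.eventually_mul_lt {g : ℝ → ℝ} {β : ℝ} (hg : RVatZero g β)
    (hgpos : ∀ y, 0 < y → 0 < g y) {lam m : ℝ} (hlam : 0 < lam) (hm : m < lam ^ β) :
    ∀ᶠ y in 𝓝[>] 0, m * g y < g (lam * y) := by
  filter_upwards [(hg lam hlam).eventually_const_lt hm, self_mem_nhdsWithin] with y hy hy0
  exact (lt_div_iff₀ (hgpos y hy0)).1 hy

theorem tendsto_sub_comp_delay_div_self {F τ : ℝ → ℝ} {L q : ℝ} (hL : L ≠ 0)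
    (hF : Tendsto (fun t => F t / t) atTop (𝓝 L))
    (hdelay : Tendsto (fun t => t - τ t) atTop atTop)
    (hτq : Tendsto (fun t => τ t / t) atTop (𝓝 q)) :
    Tendsto (fun t => (F t - F (t - τ t)) / F t) atTop (𝓝 q) := by
  have hshift : Tendsto (fun t => (t - τ t) / t) atTop (𝓝 (1 - q)) := by
    refine (tendsto_const_nhds.sub hτq).congr' ?_
    filter_upwards [eventually_gt_atTop 0] with t ht
    rw [sub_div, div_self ht.ne']
  have hlim := tendsto_const_nhds (x := (1 : ℝ)).sub
    (((hF.comp hdelay).mul hshift).div hF hL)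
  rw [mul_div_right_comm, div_self hL, one_mul, sub_sub_cancel] at hlim
  refine hlim.congr' ?_
  filter_upwards [eventually_gt_atTop 0, hdelay.eventually_gt_atTop 0,
    hF.eventually_ne hL] with t ht hw hFt
  have hFt : F t ≠ 0 := by simpa [ht.ne'] using hFt
  simp only [Function.comp_apply, Pi.div_apply]
  field_simp

theorem le_of_tendsto_div_of_hasDerivAt_le {φ φ' : ℝ → ℝ} {L K : ℝ}
    (hφ : Tendsto (fun t => φ t / t) atTop (𝓝 L))
    (hderiv : ∀ᶠ t in atTop, HasDerivAt φ (φ' t) t ∧ φ' t ≤ K) : L ≤ K := by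
  obtain ⟨T, hT⟩ := eventually_atTop.1 hderiv
  have hgrowth : ∀ t, T ≤ t → φ t - φ T ≤ K * (t - T) := fun t ht =>
    (convex_Ici T).image_sub_le_mul_sub_of_deriv_le
      (fun s hs => (hT s hs).1.continuousAt.continuousWithinAt)
      (fun s hs => (hT s (interior_subset hs)).1.differentiableAt.differentiableWithinAt)
      (fun s hs => (hT s (interior_subset hs)).1.deriv ▸ (hT s (interior_subset hs)).2)
      T self_mem_Ici t ht ht
  have hbound : Tendsto (fun t => (φ T - K * T) / t + K) atTop (𝓝 (0 + K)) :=
    (tendsto_const_nhds.div_atTop tendsto_id).add tendsto_const_nhds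
  refine le_of_tendsto_of_tendsto hφ (zero_add K ▸ hbound) ?_
  filter_upwards [eventually_ge_atTop T, eventually_gt_atTop 0] with t hTt ht
  rw [div_add' _ _ _ ht.ne', div_le_div_iff_of_pos_right ht]
  linarith [hgrowth t hTt]

theorem hasDerivAt_Gfun_comp {g x : ℝ → ℝ} (hgc : ContinuousOn g (Ioi 0))
    (hgpos : ∀ y, 0 < y → 0 < g y) {a b w t : ℝ} (hxt : 0 < x t)
    (hx : HasDerivAt x (-a * g (x t) + b * w) t) :
    HasDerivAt (fun s => Gfun g (x s)) (a - b * (w / g (x t))) t := by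
  refine ((hasDerivAt_Gfun hgc hgpos hxt).comp t hx).congr_deriv ?_
  have := (hgpos _ hxt).ne'
  field_simp
  ring

theorem stmt6_general
    (a b β q τb : ℝ) (τ g x : ℝ → ℝ)
    (hb : 0 < b) (hab : b < a)
    (hτinf : IsGLB {y : ℝ | ∃ t : ℝ, 0 ≤ t ∧ y = t - τ t} (-τb))
    -- delay growth hypotheses
    (httau : Filter.Tendsto (fun t => t - τ t) Filter.atTop Filter.atTop)
    (hq0 : 0 < q)
    (hτq : Filter.Tendsto (fun t => τ t / t) Filter.atTop (nhds q))
    -- hypotheses on g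
    (hginc : StrictMonoOn g (Set.Ici 0))
    (hgC1 : ContDiffOn ℝ 1 g (Set.Ioi 0))
    (hgpos : ∀ y : ℝ, 0 < y → 0 < g y)
    (hβ : 1 < β)
    (hgRV : RVatZero g β)
    -- x is a solution of the delay equation
    (hxpos : ∀ t : ℝ, -τb ≤ t → 0 < x t)
    (hode : ∀ t : ℝ, 0 < t →
      HasDerivAt x (-a * g (x t) + b * g (x (t - τ t))) t)
    (hx0 : Filter.Tendsto x Filter.atTop (nhds 0)) :
    ¬ Filter.Tendsto (fun t => Gfun g (x t) / t) Filter.atTop (nhds (a - b)) := by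
  intro h
  have hgc : ContinuousOn g (Ioi 0) := hgC1.continuousOn
  have hmono : MonotoneOn g (Ioi 0) := hginc.monotoneOn.mono Ioi_subset_Ici_self
  have hx0' : Tendsto x atTop (𝓝[>] 0) :=
    tendsto_nhdsWithin_iff.2 ⟨hx0, (eventually_ge_atTop (-τb)).mono hxpos⟩
  have hratio := tendsto_sub_comp_delay_div_self (sub_pos.2 hab).ne' h httau hτq
  set M : ℝ := 2 ^ β + 1
  set lam : ℝ := 1 + q / 2 / M
  have hlam : 1 < lam := lt_add_of_pos_right 1 (by positivity)
  obtain ⟨m, hm1, hmlam⟩ : ∃ m, 1 < m ∧ m < lam ^ β :=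
    exists_between (one_lt_rpow hlam (by linarith))
  have hderiv : ∀ᶠ t in atTop,
      HasDerivAt (fun s => Gfun g (x s)) (a - b * (g (x (t - τ t)) / g (x t))) t ∧
        a - b * (g (x (t - τ t)) / g (x t)) ≤ a - b * m := by
    filter_upwards [eventually_gt_atTop 0, eventually_ge_atTop (-τb),
      hx0'.eventually (hgRV.eventually_lt_mul hgpos two_pos (lt_add_one _)),
      hx0'.eventually (hgRV.eventually_mul_lt hgpos (by linarith) hmlam),
      hx0.eventually_le_const (by norm_num : (0 : ℝ) < 1 / 2),
      hratio.eventually_const_lt (half_lt_self hq0),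
      h.eventually_const_lt (sub_pos.2 hab)] with t ht hτbt h2 hglam hsmall hgap hGpos
    have hv := hxpos t hτbt
    have hu := hxpos _ (hτinf.1 ⟨t, ht.le, rfl⟩)
    have hGv : 0 < Gfun g (x t) := (div_pos_iff_of_pos_right ht).1 hGpos
    have hspace := mul_le_of_mul_Gfun_le_sub hgc hgpos hmono hv hu (by linarith) (by positivity)
      h2.le (half_pos hq0) ((lt_div_iff₀ hGv).1 hgap).le
    refine ⟨hasDerivAt_Gfun_comp hgc hgpos hv (hode t ht), ?_⟩
    have hlamv : lam * x t ∈ Ioi 0 := mul_pos (by linarith) hv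
    have : m ≤ g (x (t - τ t)) / g (x t) :=
      (le_div_iff₀ (hgpos _ hv)).2 (hglam.le.trans (hmono hlamv hu hspace))
    nlinarith
  nlinarith [le_of_tendsto_div_of_hasDerivAt_le h hderiv]

theorem stmt6
    (a b β q τb : ℝ) (τ g ψ x : ℝ → ℝ)
    (hb : 0 < b) (hab : b < a) (hτb : 0 < τb)
    (hτcont : ContinuousOn τ (Set.Ici 0))
    (hτnn : ∀ t : ℝ, 0 ≤ t → 0 ≤ τ t)
    (hτinf : IsGLB {y : ℝ | ∃ t : ℝ, 0 ≤ t ∧ y = t - τ t} (-τb))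
    -- delay growth hypotheses
    (httau : Filter.Tendsto (fun t => t - τ t) Filter.atTop Filter.atTop)
    (hq0 : 0 < q) (hq1 : q < 1)
    (hτq : Filter.Tendsto (fun t => τ t / t) Filter.atTop (nhds q))
    -- hypotheses on g
    (hg0 : g 0 = 0)
    (hginc : StrictMonoOn g (Set.Ici 0))
    (hgnn : ∀ y : ℝ, 0 ≤ y → 0 ≤ g y)
    (hgC1 : ContDiffOn ℝ 1 g (Set.Ioi 0))
    (hgpos : ∀ y : ℝ, 0 < y → 0 < g y)
    (hβ : 1 < β)
    (hgRV : RVatZero g β)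
    -- x is a solution of the delay equation
    (hψcont : ContinuousOn ψ (Set.Icc (-τb) 0))
    (hψpos : ∀ t ∈ Set.Icc (-τb) 0, 0 < ψ t)
    (hxcont : ContinuousOn x (Set.Ici (-τb)))
    (hxpos : ∀ t : ℝ, -τb ≤ t → 0 < x t)
    (hxinit : ∀ t ∈ Set.Icc (-τb) 0, x t = ψ t)
    (hode : ∀ t : ℝ, 0 < t →
      HasDerivAt x (-a * g (x t) + b * g (x (t - τ t))) t)
    (hx0 : Filter.Tendsto x Filter.atTop (nhds 0)) :
    ¬ Filter.Tendsto (fun t => Gfun g (x t) / t) Filter.atTop (nhds (a - b)) :=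
  stmt6_general a b β q τb τ g x hb hab hτinf httau hq0 hτq hginc hgC1 hgpos hβ hgRV hxpos hode hx0
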